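/- Risk reduction by perturbation (case 2 of the proof of Theorem 1): Let D be a distribution over Y, let α ∈ [0,1], let p be a strictly positive distribution over Y, and let t ≠ y* be labels with p t = p y* and p y < p t for all y ∉ {t, y*}. If D y* > D t and D y* − D t + (1−α)·(2·D y* − 1) > 0, then there exists ε with 0 < ε < p t and p y < p t − ε for all y ∉ {t, y*} such that the perturbed distribution q (defined by q y* = p y* + ε, q t = p t − ε, q y = p y otherwise) satisfies L_α(q,D) < L_α(p,D). -/

import Mathlib

/-!
As long as `ε ≥ 0` is small, `ystar` stays the unique top label of the perturbed distribution,
`t` stays second, and no hinge term is clipped at `0`. On that range the risk is the smooth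
function `perturbRisk` of `ε`, whose derivative at `0` is
`-(D ystar - D t + (1 - α) * (2 * D ystar - 1)) / p t < 0`; hence it decreases for small `ε > 0`.
-/

open Real

/-- The maximum of `p` over all labels different from `y`
(as a supremum, which for a finite nonempty label set equals the maximum). -/
noncomputable def maxNe {Y : Type*} (p : Y → ℝ) (y : Y) : ℝ :=
  sSup {x : ℝ | ∃ y' : Y, y' ≠ y ∧ p y' = x}

/-- The multiclass hinge loss of a (strictly positive) distribution `p` at label `y`. -/
noncomputable def hingeLoss {Y : Type*} (p : Y → ℝ) (y : Y) : ℝ :=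
  max 0 (1 - Real.log (p y / maxNe p y))

/-- The log loss of a (strictly positive) distribution `p` at label `y`. -/
noncomputable def logLoss {Y : Type*} (p : Y → ℝ) (y : Y) : ℝ :=
  - Real.log (p y)

/-- The hybrid loss with mixture parameter `α`. -/
noncomputable def hybridLoss {Y : Type*} (α : ℝ) (p : Y → ℝ) (y : Y) : ℝ :=
  α * logLoss p y + (1 - α) * hingeLoss p y

/-- The conditional risk `L_α(p, D) = ∑ y, D y * ℓ_α(p, y)`. -/
noncomputable def condRisk {Y : Type*} [Fintype Y] (α : ℝ) (p D : Y → ℝ) : ℝ :=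
  ∑ y, D y * hybridLoss α p y

/-- `D` is a distribution over `Y`. -/
def IsDist {Y : Type*} [Fintype Y] (D : Y → ℝ) : Prop :=
  (∀ y, 0 ≤ D y) ∧ ∑ y, D y = 1

/-- `p` is a strictly positive distribution over `Y`. -/
def IsPosDist {Y : Type*} [Fintype Y] (p : Y → ℝ) : Prop :=
  (∀ y, 0 < p y) ∧ ∑ y, p y = 1

open Filter Topology

lemma HasDerivAt.eventually_nhdsGT_lt {f : ℝ → ℝ} {f' x : ℝ} (hf : HasDerivAt f f' x)
    (hf' : f' < 0) : ∀ᶠ y in 𝓝[>] x, f y < f x := by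
  filter_upwards [((hasDerivAt_iff_tendsto_slope.mp hf).mono_left (nhdsGT_le_nhdsNE x)).eventually
    (eventually_lt_nhds hf'), self_mem_nhdsWithin] with y hslope hy
  exact (slope_neg_iff_of_le (le_of_lt hy)).mp hslope

section Losses

variable {Y : Type*}

lemma maxNe_eq_of_forall_le {p : Y → ℝ} {y y₀ : Y} (hy₀ : y₀ ≠ y)
    (hle : ∀ y', y' ≠ y → p y' ≤ p y₀) : maxNe p y = p y₀ :=
  IsGreatest.csSup_eq ⟨⟨y₀, hy₀, rfl⟩, by rintro x ⟨y', hy', rfl⟩; exact hle y' hy'⟩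

/-- Since `log 2 < 1`, a ratio `p y / maxNe p y ≤ 2` leaves the hinge unclipped. -/
lemma hybridLoss_eq_of_le_two_mul (α : ℝ) {p : Y → ℝ} {y : Y} (hy : 0 < p y)
    (hle : p y ≤ 2 * maxNe p y) :
    hybridLoss α p y = -log (p y) + (1 - α) * (1 + log (maxNe p y)) := by
  have hm : 0 < maxNe p y := by linarith
  have hratio : log (p y / maxNe p y) ≤ 1 := by
    have := Real.log_le_sub_one_of_pos (div_pos hy hm)
    have : p y / maxNe p y ≤ 2 := (div_le_iff₀ hm).2 (by linarith)
    linarith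
  rw [hybridLoss, logLoss, hingeLoss, max_eq_right (by linarith),
    Real.log_div hy.ne' hm.ne']
  ring

end Losses

section Perturbation

variable {Y : Type*} [DecidableEq Y] (p : Y → ℝ) (t ystar : Y)

def perturb (ε : ℝ) : Y → ℝ :=
  fun y => if y = ystar then p ystar + ε else if y = t then p t - ε else p y

@[simp] lemma perturb_zero : perturb p t ystar 0 = p := by
  funext y
  simp only [perturb]
  split_ifs <;> simp_all

variable {p t ystar}

lemma perturb_apply_ystar (hpt : p t = p ystar) (ε : ℝ) :
    perturb p t ystar ε ystar = p t + ε := by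
  simp [perturb, hpt]

lemma perturb_apply_t (hne : t ≠ ystar) (ε : ℝ) : perturb p t ystar ε t = p t - ε := by
  simp [perturb, hne]

lemma perturb_apply_of_ne {y : Y} (hyt : y ≠ t) (hys : y ≠ ystar) (ε : ℝ) :
    perturb p t ystar ε y = p y := by
  simp [perturb, hyt, hys]

lemma maxNe_perturb (hne : t ≠ ystar) (hpt : p t = p ystar) {ε : ℝ} (hε : 0 ≤ ε)
    (hgap : ∀ y, y ≠ t → y ≠ ystar → p y ≤ p t - ε) (y : Y) :
    maxNe (perturb p t ystar ε) y = if y = ystar then p t - ε else p t + ε := by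
  split_ifs with hys
  · subst hys
    rw [← perturb_apply_t hne ε]
    refine maxNe_eq_of_forall_le hne fun y' hys' => ?_
    rcases eq_or_ne y' t with rfl | hyt'
    · exact le_rfl
    · rw [perturb_apply_of_ne hyt' hys', perturb_apply_t hne]
      exact hgap y' hyt' hys'
  · rw [← perturb_apply_ystar hpt ε]
    refine maxNe_eq_of_forall_le (Ne.symm hys) fun y' _ => ?_
    rw [perturb_apply_ystar hpt]
    rcases eq_or_ne y' ystar with rfl | hys'
    · rw [perturb_apply_ystar hpt]
    rcases eq_or_ne y' t with rfl | hyt'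
    · rw [perturb_apply_t hne]; linarith
    · rw [perturb_apply_of_ne hyt' hys']; linarith [hgap y' hyt' hys']

variable [Fintype Y]

variable (p t ystar) in
/-- Closed form of `condRisk α (perturb p t ystar ε) D` for small `ε ≥ 0` (`condRisk_perturb`);
unlike the risk itself, it is differentiable at `ε = 0`. -/
noncomputable def perturbRisk (α : ℝ) (D : Y → ℝ) (ε : ℝ) : ℝ :=
  ∑ y, D y * (-log (perturb p t ystar ε y) +
    (1 - α) * (1 + log (if y = ystar then p t - ε else p t + ε)))

lemma condRisk_perturb (hne : t ≠ ystar) (hpt : p t = p ystar) (hp : ∀ y, 0 < p y)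
    (α : ℝ) (D : Y → ℝ) {ε : ℝ} (hε : 0 ≤ ε) (hε3 : 3 * ε ≤ p t)
    (hgap : ∀ y, y ≠ t → y ≠ ystar → p y ≤ p t - ε) :
    condRisk α (perturb p t ystar ε) D = perturbRisk p t ystar α D ε := by
  refine Finset.sum_congr rfl fun y _ => ?_
  have hmax := maxNe_perturb hne hpt hε hgap y
  have hpt_pos := hp t
  have hbounds : 0 < perturb p t ystar ε y ∧
      perturb p t ystar ε y ≤ 2 * (if y = ystar then p t - ε else p t + ε) := by
    rcases eq_or_ne y ystar with rfl | hys
    · rw [perturb_apply_ystar hpt, if_pos rfl]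
      constructor <;> linarith
    rcases eq_or_ne y t with rfl | hyt
    · rw [perturb_apply_t hne, if_neg hne]
      constructor <;> linarith
    · rw [perturb_apply_of_ne hyt hys, if_neg hys]
      constructor <;> linarith [hp y, hgap y hyt hys]
  rw [← hmax] at hbounds
  rw [hybridLoss_eq_of_le_two_mul α hbounds.1 hbounds.2, hmax]

lemma hasDerivAt_perturbRisk (hne : t ≠ ystar) (hpt : p t = p ystar) (hp : ∀ y, 0 < p y)
    (α : ℝ) {D : Y → ℝ} (hD : ∑ y, D y = 1) :
    HasDerivAt (perturbRisk p t ystar α D)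
      (-(D ystar - D t + (1 - α) * (2 * D ystar - 1)) / p t) 0 := by
  have hpt0 : p t ≠ 0 := (hp t).ne'
  have hplus : HasDerivAt (fun ε => log (p t + ε)) (1 / p t) 0 := by
    simpa using ((hasDerivAt_id (0 : ℝ)).const_add (p t)).log (by simpa using hpt0)
  have hminus : HasDerivAt (fun ε => log (p t - ε)) (-1 / p t) 0 := by
    simpa using ((hasDerivAt_id (0 : ℝ)).const_sub (p t)).log (by simpa using hpt0)
  have hterm : ∀ y, HasDerivAt (fun ε => D y * (-log (perturb p t ystar ε y) +
      (1 - α) * (1 + log (if y = ystar then p t - ε else p t + ε))))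
      (D y * ((1 - α) / p t + (if y = t then 1 / p t else 0) -
        (if y = ystar then (3 - 2 * α) / p t else 0))) 0 := by
    intro y
    rcases eq_or_ne y ystar with rfl | hys
    · simp only [perturb_apply_ystar hpt, if_true, if_neg hne.symm, add_zero]
      refine ((hplus.fun_neg.fun_add ((hminus.const_add 1).const_mul (1 - α))).const_mul
        (D y)).congr_deriv ?_
      field_simp
      ring
    rcases eq_or_ne y t with rfl | hyt
    · simp only [perturb_apply_t hne, if_true, if_neg hne, sub_zero]
      refine ((hminus.fun_neg.fun_add ((hplus.const_add 1).const_mul (1 - α))).const_mul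
        (D y)).congr_deriv ?_
      field_simp
      ring
    · simp only [perturb_apply_of_ne hyt hys, if_neg hyt, if_neg hys, add_zero, sub_zero]
      refine (((hasDerivAt_const (0 : ℝ) (-log (p y))).fun_add
        ((hplus.const_add 1).const_mul (1 - α))).const_mul (D y)).congr_deriv ?_
      field_simp
      ring
  refine (HasDerivAt.fun_sum (u := Finset.univ) fun y _ => hterm y).congr_deriv ?_
  simp only [mul_add, mul_sub, Finset.sum_add_distrib, Finset.sum_sub_distrib, mul_ite, mul_zero,
    Finset.sum_ite_eq', Finset.mem_univ, if_true, ← Finset.sum_mul, hD]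
  field_simp
  ring

end Perturbation

theorem risk_reduction_by_perturbation_general {Y : Type*} [Fintype Y] [DecidableEq Y]
    (D : Y → ℝ) (hD : IsDist D)
    (α : ℝ)
    (p : Y → ℝ) (hp : IsPosDist p)
    (t ystar : Y) (hne : t ≠ ystar) (hpt : p t = p ystar)
    (hlt : ∀ y, y ≠ t → y ≠ ystar → p y < p t)
    (hcond : 0 < D ystar - D t + (1 - α) * (2 * D ystar - 1)) :
    ∃ ε : ℝ, 0 < ε ∧ ε < p t ∧ (∀ y, y ≠ t → y ≠ ystar → p y < p t - ε) ∧
      condRisk α (fun y => if y = ystar then p ystar + ε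
        else if y = t then p t - ε else p y) D < condRisk α p D := by
  have hpt0 := hp.1 t
  have hdecr : ∀ᶠ ε in 𝓝[>] 0, perturbRisk p t ystar α D ε < perturbRisk p t ystar α D 0 :=
    (hasDerivAt_perturbRisk hne hpt hp.1 α hD.2).eventually_nhdsGT_lt
      (div_neg_of_neg_of_pos (neg_neg_of_pos hcond) hpt0)
  have hgap : ∀ᶠ ε in 𝓝 (0 : ℝ), ∀ y, y ≠ t → y ≠ ystar → p y < p t - ε := by
    refine eventually_all.2 fun y => ?_
    simp only [eventually_imp_distrib_left]
    exact fun hyt hys =>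
      (eventually_lt_nhds (sub_pos.2 (hlt y hyt hys))).mono fun ε hε => by linarith
  have hsmall : ∀ᶠ ε in 𝓝 (0 : ℝ), 3 * ε ≤ p t :=
    (eventually_lt_nhds (by positivity : 0 < p t / 3)).mono fun ε hε => by linarith
  obtain ⟨ε, hε0, ⟨hgapε, hε3⟩, hdecrε⟩ := (eventually_mem_nhdsWithin.and
    (((hgap.and hsmall).filter_mono nhdsWithin_le_nhds).and hdecr)).exists
  refine ⟨ε, hε0, by linarith, hgapε, ?_⟩
  calc condRisk α (perturb p t ystar ε) D = perturbRisk p t ystar α D ε :=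
        condRisk_perturb hne hpt hp.1 α D hε0.le hε3 fun y hyt hys => (hgapε y hyt hys).le
    _ < perturbRisk p t ystar α D 0 := hdecrε
    _ = condRisk α p D := by
        rw [← condRisk_perturb hne hpt hp.1 α D le_rfl (by linarith)
          fun y hyt hys => by linarith [hlt y hyt hys], perturb_zero]

/-- Risk reduction by perturbation (case 2 of the proof of Theorem 1). -/
theorem risk_reduction_by_perturbation {Y : Type*} [Fintype Y] [DecidableEq Y]
    (hcard : 1 < Fintype.card Y)
    (D : Y → ℝ) (hD : IsDist D)
    (α : ℝ) (hα : α ∈ Set.Icc (0 : ℝ) 1)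
    (p : Y → ℝ) (hp : IsPosDist p)
    (t ystar : Y) (hne : t ≠ ystar) (hpt : p t = p ystar)
    (hlt : ∀ y, y ≠ t → y ≠ ystar → p y < p t)
    (hDgt : D t < D ystar)
    (hcond : 0 < D ystar - D t + (1 - α) * (2 * D ystar - 1)) :
    ∃ ε : ℝ, 0 < ε ∧ ε < p t ∧ (∀ y, y ≠ t → y ≠ ystar → p y < p t - ε) ∧
      condRisk α (fun y => if y = ystar then p ystar + ε
        else if y = t then p t - ε else p y) D < condRisk α p D :=
  risk_reduction_by_perturbation_general D hD α p hp t ystar hne hpt hlt hcond
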